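/- Let (Ω, 𝓕, μ) be a probability space with a filtration (𝓕_t)_{t∈ℕ}. Let f : ℝ^d → ℝ be differentiable with L-Lipschitz gradient ∇f and bounded below: f(x) ≥ f* for all x. For each t, let G_t : ℝ^d → Ω → ℝ^d be measurable and satisfy: (i) ‖G_t y ω − G_t z ω‖ ≤ L‖y − z‖ for all y, z, ω; (ii) for every 𝓕_t-measurable Y : Ω → ℝ^d, the conditional expectation of ω ↦ G_t (Y ω) ω given 𝓕_t equals ω ↦ ∇f(Y ω) a.e., and the conditional expectation of ω ↦ ‖G_t (Y ω) ω − ∇f(Y ω)‖² given 𝓕_t is ≤ σ² a.e. Fix T ≥ 1, η₀, ρ₀, D₀ > 0, set η = η₀/√T and ρ = ρ₀/√T, and assume η ≤ 2/(3L). Let X_0 ≡ x₀ be constant, let ε_t : Ω → ℝ^d be measurable with ‖ε_t ω‖ ≤ ρ D₀ μ-a.e., let X_{t+1} = X_t − η · G_t(X_t + ε_t), and assume X_t is 𝓕_t-measurable for every t (and all integrands below are integrable). Then: (1 − 3Lη/2) · (1/T) Σ_{t=0}^{T−1} E[‖∇f(X_t)‖²] ≤ (f(x₀) − f*)/(η₀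 √T) + L ρ₀² D₀² / (2 η₀ √T) + L³ η₀ ρ₀² D₀² / T^{3/2} + L η₀ σ² / √T. -/

import Mathlib

open RealInnerProductSpace MeasureTheory

theorem descent_lemma {d : ℕ} (f : EuclideanSpace ℝ (Fin d) → ℝ)
    (f' : EuclideanSpace ℝ (Fin d) → EuclideanSpace ℝ (Fin d))
    (hf : ∀ x, HasGradientAt f (f' x) x) (L : ℝ) (hL : 0 < L)
    (hSmooth : ∀ y z, ‖f' y - f' z‖ ≤ L * ‖y - z‖)
    (x v : EuclideanSpace ℝ (Fin d)) :
    f (x + v) ≤ f x + ⟪f' x, v⟫ + L / 2 * ‖v‖ ^ 2 := by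
  set φ : ℝ → ℝ := fun s => f (x + s • v) - s * ⟪f' x, v⟫ - L / 2 * s ^ 2 * ‖v‖ ^ 2 with hφ
  have hd : ∀ s : ℝ, HasDerivAt φ (⟪f' (x + s • v), v⟫ - ⟪f' x, v⟫ - L * s * ‖v‖ ^ 2) s := by
    intro s
    have hc : HasDerivAt (fun s : ℝ => x + s • v) v s := by
      simpa using ((hasDerivAt_id s).smul_const v).const_add x
    have h1 : HasDerivAt (fun s : ℝ => f (x + s • v)) ⟪f' (x + s • v), v⟫ s := by
      have := (hf (x + s • v)).hasFDerivAt.comp_hasDerivAt s hc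
      simpa [InnerProductSpace.toDual_apply_apply, Function.comp_def] using this
    have h2 : HasDerivAt (fun s : ℝ => s * ⟪f' x, v⟫) ⟪f' x, v⟫ s := by
      simpa using (hasDerivAt_id s).mul_const (⟪f' x, v⟫ : ℝ)
    have h3 : HasDerivAt (fun s : ℝ => L / 2 * s ^ 2 * ‖v‖ ^ 2) (L * s * ‖v‖ ^ 2) s := by
      have : HasDerivAt (fun s : ℝ => s ^ 2) (2 * s) s := by
        simpa using hasDerivAt_pow 2 s
      have := (this.const_mul (L / 2)).mul_const (‖v‖ ^ 2)
      rw [show L * s * ‖v‖ ^ 2 = L / 2 * (2 * s) * ‖v‖ ^ 2 by ring]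
      exact this
    exact (h1.sub h2).sub h3
  have hanti : AntitoneOn φ (Set.Icc 0 1) := by
    apply antitoneOn_of_deriv_nonpos (convex_Icc 0 1)
    · exact fun s _ => ((hd s).differentiableAt.continuousAt).continuousWithinAt
    · exact fun s _ => ((hd s).differentiableAt).differentiableWithinAt
    · intro s hs
      rw [(hd s).deriv]
      rw [interior_Icc] at hs
      have hs0 : 0 ≤ s := hs.1.le
      have : ⟪f' (x + s • v) - f' x, v⟫ ≤ L * s * ‖v‖ ^ 2 := by
        calc ⟪f' (x + s • v) - f' x, v⟫ ≤ ‖f' (x + s • v) - f' x‖ * ‖v‖ :=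
              real_inner_le_norm _ _
          _ ≤ (L * ‖(x + s • v) - x‖) * ‖v‖ := by
              gcongr; exact hSmooth _ _
          _ = L * s * ‖v‖ ^ 2 := by
              rw [add_sub_cancel_left, norm_smul, Real.norm_eq_abs, abs_of_nonneg hs0]; ring
      rw [inner_sub_left] at this
      linarith
  have h01 := hanti (Set.mem_Icc.2 ⟨le_refl 0, zero_le_one⟩) (Set.mem_Icc.2 ⟨zero_le_one, le_refl 1⟩) zero_le_one
  simp only [hφ, one_smul, zero_smul, add_zero] at h01
  nlinarith [h01]

lemma abs_coord_le {d : ℕ} (x : EuclideanSpace ℝ (Fin d)) (i : Fin d) : |x i| ≤ ‖x‖ := by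
  rw [EuclideanSpace.norm_eq]
  have h1 : |x i| = Real.sqrt (‖x i‖ ^ 2) := by
    rw [Real.sqrt_sq_eq_abs]; simp
  rw [h1]
  apply Real.sqrt_le_sqrt
  exact Finset.single_le_sum (f := fun j => ‖x j‖ ^ 2) (fun j _ => by positivity) (Finset.mem_univ i)

lemma coord_measurable {d : ℕ} {Ω : Type*} {mΩ : MeasurableSpace Ω}
    {u : Ω → EuclideanSpace ℝ (Fin d)} (hu : Measurable[mΩ] u) (i : Fin d) :
    Measurable[mΩ] fun ω => u ω i := by
  exact (EuclideanSpace.proj (𝕜 := ℝ) i).continuous.measurable.comp hu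

lemma prod_coord_integrable {d : ℕ} {Ω : Type*} {m0 : MeasurableSpace Ω} {μ : Measure Ω}
    {A u : Ω → EuclideanSpace ℝ (Fin d)}
    (hAm : Measurable[m0] A) (hum : Measurable[m0] u)
    (IA2 : Integrable (fun ω => ‖A ω‖ ^ 2) μ) (Iu2 : Integrable (fun ω => ‖u ω‖ ^ 2) μ)
    (i : Fin d) : Integrable (fun ω => A ω i * u ω i) μ := by
  refine (IA2.add Iu2).mono' ?_ ?_
  · exact ((coord_measurable hAm i).mul (coord_measurable hum i)).aestronglyMeasurable
  · refine ae_of_all _ fun ω => ?_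
    have h1 := abs_coord_le (A ω) i
    have h2 := abs_coord_le (u ω) i
    have h3 : |A ω i| * |u ω i| ≤ ‖A ω‖ * ‖u ω‖ :=
      mul_le_mul h1 h2 (abs_nonneg _) (norm_nonneg _)
    simp only [Pi.add_apply, Real.norm_eq_abs, abs_mul]
    nlinarith [sq_nonneg (‖A ω‖ - ‖u ω‖)]

lemma inner_condexp_eq {d : ℕ} {Ω : Type*} {m : MeasurableSpace Ω} {m0 : MeasurableSpace Ω}
    (μ : Measure Ω) [IsProbabilityMeasure μ] (hm : m ≤ m0)
    (A h : Ω → EuclideanSpace ℝ (Fin d))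
    (hAm : Measurable[m] A) (hhm : Measurable[m0] h)
    (IA : Integrable A μ) (Ih : Integrable h μ)
    (IA2 : Integrable (fun ω => ‖A ω‖ ^ 2) μ) (Ih2 : Integrable (fun ω => ‖h ω‖ ^ 2) μ)
    (hcond : μ[h | m] =ᵐ[μ] A) :
    ∫ ω, ⟪A ω, h ω⟫ ∂μ = ∫ ω, ‖A ω‖ ^ 2 ∂μ := by
  haveI : SigmaFinite (μ.trim hm) := inferInstance
  have hAm0 : Measurable[m0] A := hAm.mono hm le_rfl
  have key : ∀ i : Fin d, ∫ ω, A ω i * h ω i ∂μ = ∫ ω, A ω i * A ω i ∂μ := by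
    intro i
    have hAim : StronglyMeasurable[m] (fun ω => A ω i) :=
      (coord_measurable hAm i).stronglyMeasurable
    have hAi : Integrable (fun ω => A ω i) μ := by
      refine IA.norm.mono' (coord_measurable hAm0 i).aestronglyMeasurable ?_
      exact ae_of_all _ fun ω => by simpa [Real.norm_eq_abs] using abs_coord_le (A ω) i
    have hhi : Integrable (fun ω => h ω i) μ := by
      refine Ih.norm.mono' (coord_measurable hhm i).aestronglyMeasurable ?_
      exact ae_of_all _ fun ω => by simpa [Real.norm_eq_abs] using abs_coord_le (h ω) i
    have hci : (fun ω => A ω i) =ᵐ[μ] μ[fun ω => h ω i | m] := by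
      refine ae_eq_condExp_of_forall_setIntegral_eq hm hhi
        (fun s _ _ => hAi.integrableOn) ?_ hAim.aestronglyMeasurable
      intro s hs hμs
      have hint : ∫ ω in s, h ω ∂μ = ∫ ω in s, A ω ∂μ := by
        rw [← setIntegral_condExp hm Ih hs]
        exact setIntegral_congr_ae (hm s hs) (hcond.mono fun ω hω _ => hω)
      have h1 : ∫ ω in s, A ω i ∂μ = (EuclideanSpace.proj (𝕜 := ℝ) i) (∫ ω in s, A ω ∂μ) :=
        (EuclideanSpace.proj (𝕜 := ℝ) i).integral_comp_comm IA.integrableOn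
      have h2 : ∫ ω in s, h ω i ∂μ = (EuclideanSpace.proj (𝕜 := ℝ) i) (∫ ω in s, h ω ∂μ) :=
        (EuclideanSpace.proj (𝕜 := ℝ) i).integral_comp_comm Ih.integrableOn
      rw [h1, h2, hint]
    have hIprod : Integrable (fun ω => A ω i * h ω i) μ :=
      prod_coord_integrable hAm0 hhm IA2 Ih2 i
    calc ∫ ω, A ω i * h ω i ∂μ = ∫ ω, (μ[fun ω => A ω i * h ω i | m]) ω ∂μ :=
          (integral_condExp hm).symm
      _ = ∫ ω, A ω i * A ω i ∂μ := by
          refine integral_congr_ae ?_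
          have := condExp_mul_of_stronglyMeasurable_left (μ := μ) (m := m) hAim hIprod hhi
          refine this.trans ?_
          filter_upwards [hci] with ω hω
          simp only [Pi.mul_apply]
          rw [← hω]
  have expand : ∀ (u : Ω → EuclideanSpace ℝ (Fin d)),
      (∀ i, Integrable (fun ω => A ω i * u ω i) μ) →
      ∫ ω, ⟪A ω, u ω⟫ ∂μ = ∑ i, ∫ ω, A ω i * u ω i ∂μ := by
    intro u hu
    rw [← integral_finset_sum _ fun i _ => hu i]
    refine integral_congr_ae (ae_of_all _ fun ω => ?_)
    simp [PiLp.inner_apply, RCLike.inner_apply, conj_trivial, mul_comm]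
  calc ∫ ω, ⟪A ω, h ω⟫ ∂μ
      = ∑ i, ∫ ω, A ω i * h ω i ∂μ :=
        expand h fun i => prod_coord_integrable hAm0 hhm IA2 Ih2 i
    _ = ∑ i, ∫ ω, A ω i * A ω i ∂μ := Finset.sum_congr rfl fun i _ => key i
    _ = ∫ ω, ⟪A ω, A ω⟫ ∂μ :=
        (expand A fun i => prod_coord_integrable hAm0 hAm0 IA2 IA2 i).symm
    _ = ∫ ω, ‖A ω‖ ^ 2 ∂μ := by
        refine integral_congr_ae (ae_of_all _ fun ω => ?_)
        exact real_inner_self_eq_norm_sq (A ω)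

section
variable {d : ℕ}

set_option maxHeartbeats 1000000 in
lemma step_bound {Ω : Type*} {m : MeasurableSpace Ω} {m0 : MeasurableSpace Ω}
    (μ : Measure Ω) [IsProbabilityMeasure μ] (hm : m ≤ m0)
    (f : EuclideanSpace ℝ (Fin d) → ℝ) (f' : EuclideanSpace ℝ (Fin d) → EuclideanSpace ℝ (Fin d))
    (L σ η B : ℝ) (hL : 0 < L) (hη : 0 < η) (hB : 0 ≤ B)
    (hfc : Continuous f')
    (hdesc : ∀ x v, f (x + v) ≤ f x + ⟪f' x, v⟫ + L / 2 * ‖v‖ ^ 2)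
    (X X' g h : Ω → EuclideanSpace ℝ (Fin d))
    (hX' : X' = fun ω => X ω - η • g ω)
    (hXm : Measurable[m] X) (hgm : Measurable[m0] g) (hhm : Measurable[m0] h)
    (hgh : ∀ᵐ ω ∂μ, ‖g ω - h ω‖ ≤ B)
    (hcond : μ[h | m] =ᵐ[μ] fun ω => f' (X ω))
    (hcvar : ∀ᵐ ω ∂μ, (μ[fun ω' => ‖h ω' - f' (X ω')‖ ^ 2 | m]) ω ≤ σ ^ 2)
    (IfX : Integrable (fun ω => f (X ω)) μ) (IfX' : Integrable (fun ω => f (X' ω)) μ)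
    (IA2 : Integrable (fun ω => ‖f' (X ω)‖ ^ 2) μ)
    (Ig : Integrable g μ) (Ig2 : Integrable (fun ω => ‖g ω‖ ^ 2) μ)
    (IAg : Integrable (fun ω => ⟪f' (X ω), g ω⟫) μ) :
    ∫ ω, f (X' ω) ∂μ ≤ ∫ ω, f (X ω) ∂μ
      - η * (1 - 3 * L * η / 2) * ∫ ω, ‖f' (X ω)‖ ^ 2 ∂μ
      + (B ^ 2 / (2 * L) + L * η ^ 2 * σ ^ 2 + L * η ^ 2 * B ^ 2) := by
  haveI : SigmaFinite (μ.trim hm) := inferInstance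
  have hLne : L ≠ 0 := hL.ne'
  have hηne : η ≠ 0 := hη.ne'
  have hAm : Measurable[m] (fun ω => f' (X ω)) := hfc.measurable.comp hXm
  have hAm0 : Measurable[m0] (fun ω => f' (X ω)) := hAm.mono hm le_rfl
  -- integrability facts
  have IA1 : Integrable (fun ω => ‖f' (X ω)‖) μ := by
    refine ((integrable_const (1 : ℝ)).add IA2).mono' hAm0.norm.aestronglyMeasurable ?_
    refine ae_of_all _ fun ω => ?_
    simp only [Pi.add_apply, Real.norm_eq_abs, abs_norm]
    nlinarith [sq_nonneg (‖f' (X ω)‖ - 1)]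
  have IAvec : Integrable (fun ω => f' (X ω)) μ :=
    IA1.mono' hAm0.aestronglyMeasurable (ae_of_all _ fun ω => le_rfl)
  have Igh : Integrable (fun ω => g ω - h ω) μ :=
    (integrable_const B).mono' (hgm.sub hhm).aestronglyMeasurable hgh
  have Ihvec : Integrable h μ := by
    refine (Ig.sub Igh).congr (ae_of_all _ fun ω => ?_)
    simp [Pi.sub_apply]
  have Ih2 : Integrable (fun ω => ‖h ω‖ ^ 2) μ := by
    refine ((Ig2.const_mul 2).add (integrable_const (2 * B ^ 2))).mono'
      ((hhm.norm.pow_const 2).aestronglyMeasurable) ?_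
    filter_upwards [hgh] with ω hω
    have h1 : ‖h ω‖ ≤ ‖g ω‖ + B := by
      calc ‖h ω‖ = ‖g ω - (g ω - h ω)‖ := by rw [sub_sub_cancel]
        _ ≤ ‖g ω‖ + ‖g ω - h ω‖ := norm_sub_le _ _
        _ ≤ ‖g ω‖ + B := by linarith
    rw [Pi.add_apply, Real.norm_eq_abs, abs_of_nonneg (by positivity : (0:ℝ) ≤ ‖h ω‖ ^ 2)]
    nlinarith [norm_nonneg (h ω), norm_nonneg (g ω), sq_nonneg (‖g ω‖ - B)]
  have IAh : Integrable (fun ω => ⟪f' (X ω), h ω⟫) μ := by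
    refine (IA2.add Ih2).mono' (hAm0.inner hhm).aestronglyMeasurable ?_
    refine ae_of_all _ fun ω => ?_
    have := abs_real_inner_le_norm (f' (X ω)) (h ω)
    simp only [Pi.add_apply, Real.norm_eq_abs]
    nlinarith [sq_nonneg (‖f' (X ω)‖ - ‖h ω‖)]
  have Iv2 : Integrable (fun ω => ‖h ω - f' (X ω)‖ ^ 2) μ := by
    refine ((Ih2.const_mul 2).add (IA2.const_mul 2)).mono'
      (((hhm.sub hAm0).norm.pow_const 2).aestronglyMeasurable) ?_
    refine ae_of_all _ fun ω => ?_
    have h1 : ‖h ω - f' (X ω)‖ ≤ ‖h ω‖ + ‖f' (X ω)‖ := norm_sub_le _ _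
    rw [Pi.add_apply, Real.norm_eq_abs, abs_of_nonneg (by positivity : (0:ℝ) ≤ ‖h ω - f' (X ω)‖ ^ 2)]
    nlinarith [norm_nonneg (h ω - f' (X ω)), norm_nonneg (h ω), norm_nonneg (f' (X ω)),
      sq_nonneg (‖h ω‖ - ‖f' (X ω)‖)]
  have IAgh : Integrable (fun ω => ⟪f' (X ω), g ω - h ω⟫) μ := by
    refine (IAg.sub IAh).congr (ae_of_all _ fun ω => ?_)
    simp only [Pi.sub_apply, inner_sub_right]
  have IAhA : Integrable (fun ω => ⟪f' (X ω), h ω - f' (X ω)⟫) μ := by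
    refine (IAh.sub IA2).congr (ae_of_all _ fun ω => ?_)
    simp only [Pi.sub_apply, inner_sub_right, real_inner_self_eq_norm_sq]
  -- key conditional facts
  have K1 : ∫ ω, ⟪f' (X ω), h ω⟫ ∂μ = ∫ ω, ‖f' (X ω)‖ ^ 2 ∂μ :=
    inner_condexp_eq μ hm _ h hAm hhm IAvec Ihvec IA2 Ih2 hcond
  have K2 : ∫ ω, ‖h ω - f' (X ω)‖ ^ 2 ∂μ ≤ σ ^ 2 := by
    calc ∫ ω, ‖h ω - f' (X ω)‖ ^ 2 ∂μ
        = ∫ ω, (μ[fun ω' => ‖h ω' - f' (X ω')‖ ^ 2 | m]) ω ∂μ := (integral_condExp hm).symm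
      _ ≤ ∫ _ω, σ ^ 2 ∂μ := integral_mono_ae integrable_condExp (integrable_const _) hcvar
      _ = σ ^ 2 := by simp
  have Kcross : ∫ ω, ⟪f' (X ω), h ω - f' (X ω)⟫ ∂μ = 0 := by
    have e : (fun ω => ⟪f' (X ω), h ω - f' (X ω)⟫)
        = fun ω => ⟪f' (X ω), h ω⟫ - ‖f' (X ω)‖ ^ 2 := by
      funext ω; rw [inner_sub_right, real_inner_self_eq_norm_sq]
    rw [e, integral_sub IAh IA2, K1, sub_self]
  -- E ‖h‖² ≤ E‖A‖² + σ²
  have I2c : Integrable (fun ω => 2 * ⟪f' (X ω), h ω - f' (X ω)⟫) μ := by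
    exact IAhA.const_mul 2
  have I12 : Integrable (fun ω => ‖f' (X ω)‖ ^ 2 + 2 * ⟪f' (X ω), h ω - f' (X ω)⟫) μ := by
    exact IA2.add I2c
  have Eh2 : ∫ ω, ‖h ω‖ ^ 2 ∂μ ≤ ∫ ω, ‖f' (X ω)‖ ^ 2 ∂μ + σ ^ 2 := by
    have hexp : (fun ω => ‖h ω‖ ^ 2) = fun ω =>
        (‖f' (X ω)‖ ^ 2 + 2 * ⟪f' (X ω), h ω - f' (X ω)⟫) + ‖h ω - f' (X ω)‖ ^ 2 := by
      funext ω
      have e0 : h ω = f' (X ω) + (h ω - f' (X ω)) := by abel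
      calc ‖h ω‖ ^ 2 = ‖f' (X ω) + (h ω - f' (X ω))‖ ^ 2 := by rw [← e0]
        _ = _ := by rw [@norm_add_sq_real]
    rw [hexp, integral_add I12 Iv2, integral_add IA2 I2c, integral_const_mul, Kcross]
    simp only [mul_zero, add_zero]
    linarith [K2]
  -- E ‖g‖² bound
  have Eg2 : ∫ ω, ‖g ω‖ ^ 2 ∂μ ≤ 2 * ∫ ω, ‖f' (X ω)‖ ^ 2 ∂μ + 2 * σ ^ 2 + 2 * B ^ 2 := by
    have Ih2' : Integrable (fun ω => 2 * ‖h ω‖ ^ 2) μ := by exact Ih2.const_mul 2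
    have step : ∫ ω, ‖g ω‖ ^ 2 ∂μ ≤ ∫ ω, (2 * ‖h ω‖ ^ 2 + 2 * B ^ 2) ∂μ := by
      refine integral_mono_ae Ig2 (by exact Ih2'.add (integrable_const _)) ?_
      filter_upwards [hgh] with ω hω
      have h1 : ‖g ω‖ ≤ ‖h ω‖ + B := by
        calc ‖g ω‖ = ‖h ω + (g ω - h ω)‖ := by rw [add_sub_cancel]
          _ ≤ ‖h ω‖ + ‖g ω - h ω‖ := norm_add_le _ _
          _ ≤ ‖h ω‖ + B := by linarith
      nlinarith [norm_nonneg (g ω), norm_nonneg (h ω), sq_nonneg (‖h ω‖ - B)]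
    rw [integral_add Ih2' (integrable_const _), integral_const_mul] at step
    simp only [integral_const, probReal_univ, measure_univ, ENNReal.toReal_one, smul_eq_mul, one_mul] at step
    linarith [Eh2]
  -- E ⟪A, g⟫ lower bound
  have EAg : ∫ ω, ‖f' (X ω)‖ ^ 2 ∂μ
      - (L * η / 2 * ∫ ω, ‖f' (X ω)‖ ^ 2 ∂μ + B ^ 2 / (2 * L * η))
      ≤ ∫ ω, ⟪f' (X ω), g ω⟫ ∂μ := by
    have split : ∫ ω, ⟪f' (X ω), g ω⟫ ∂μ
        = ∫ ω, ⟪f' (X ω), h ω⟫ ∂μ + ∫ ω, ⟪f' (X ω), g ω - h ω⟫ ∂μ := by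
      rw [← integral_add IAh IAgh]
      refine integral_congr_ae (ae_of_all _ fun ω => ?_)
      simp only [← inner_add_right]
      congr 1
      abel
    have IL : Integrable (fun ω => -(L * η / 2 * ‖f' (X ω)‖ ^ 2 + B ^ 2 / (2 * L * η))) μ := by
      exact ((IA2.const_mul _).add (integrable_const _)).neg
    have young := integral_mono_ae IL IAgh ?_
    · have e : ∫ ω, -(L * η / 2 * ‖f' (X ω)‖ ^ 2 + B ^ 2 / (2 * L * η)) ∂μ
          = -(L * η / 2 * ∫ ω, ‖f' (X ω)‖ ^ 2 ∂μ + B ^ 2 / (2 * L * η)) := by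
        rw [integral_neg, integral_add (by exact IA2.const_mul _) (integrable_const _),
          integral_const_mul]
        simp only [integral_const, probReal_univ, measure_univ, ENNReal.toReal_one, smul_eq_mul, one_mul]
      rw [e] at young
      rw [split, K1]
      linarith
    · filter_upwards [hgh] with ω hω
      have h1 : |⟪f' (X ω), g ω - h ω⟫| ≤ ‖f' (X ω)‖ * ‖g ω - h ω‖ := abs_real_inner_le_norm _ _
      have h2 : ‖f' (X ω)‖ * ‖g ω - h ω‖ ≤ ‖f' (X ω)‖ * B :=
        mul_le_mul_of_nonneg_left hω (norm_nonneg _)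
      have h3 : ‖f' (X ω)‖ * B ≤ L * η / 2 * ‖f' (X ω)‖ ^ 2 + B ^ 2 / (2 * L * η) := by
        rw [← sub_nonneg]
        have expand : L * η / 2 * ‖f' (X ω)‖ ^ 2 + B ^ 2 / (2 * L * η) - ‖f' (X ω)‖ * B
            = (L * η * ‖f' (X ω)‖ - B) ^ 2 / (2 * L * η) := by
          field_simp
          ring
        rw [expand]
        positivity
      calc -(L * η / 2 * ‖f' (X ω)‖ ^ 2 + B ^ 2 / (2 * L * η))
          ≤ -|⟪f' (X ω), g ω - h ω⟫| := by linarith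
        _ ≤ ⟪f' (X ω), g ω - h ω⟫ := neg_abs_le _
  -- descent pointwise
  have hdesc2 : ∀ ω, f (X' ω) ≤ f (X ω) - η * ⟪f' (X ω), g ω⟫ + L * η ^ 2 / 2 * ‖g ω‖ ^ 2 := by
    intro ω
    have key := hdesc (X ω) (-(η • g ω))
    have e1 : X ω + -(η • g ω) = X' ω := by rw [hX']; simp [sub_eq_add_neg]
    have e2 : ⟪f' (X ω), -(η • g ω)⟫ = -(η * ⟪f' (X ω), g ω⟫) := by
      rw [inner_neg_right, real_inner_smul_right]
    have e3 : ‖-(η • g ω)‖ ^ 2 = η ^ 2 * ‖g ω‖ ^ 2 := by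
      rw [norm_neg, norm_smul, Real.norm_eq_abs, abs_of_pos hη, mul_pow]
    rw [e1, e2, e3] at key
    linarith [key]
  -- integrate descent
  have I1 : Integrable (fun ω => f (X ω) - η * ⟪f' (X ω), g ω⟫) μ := by
    exact IfX.sub (IAg.const_mul η)
  have I2 : Integrable (fun ω => L * η ^ 2 / 2 * ‖g ω‖ ^ 2) μ := by
    exact Ig2.const_mul _
  have Idesc : ∫ ω, f (X' ω) ∂μ ≤ ∫ ω, f (X ω) ∂μ - η * ∫ ω, ⟪f' (X ω), g ω⟫ ∂μ
      + L * η ^ 2 / 2 * ∫ ω, ‖g ω‖ ^ 2 ∂μ := by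
    have step : ∫ ω, f (X' ω) ∂μ
        ≤ ∫ ω, ((f (X ω) - η * ⟪f' (X ω), g ω⟫) + L * η ^ 2 / 2 * ‖g ω‖ ^ 2) ∂μ := by
      refine integral_mono_ae IfX' (by exact I1.add I2) ?_
      exact ae_of_all _ hdesc2
    rw [integral_add I1 I2, integral_sub IfX (by exact IAg.const_mul η),
      integral_const_mul, integral_const_mul] at step
    linarith
  -- combine
  set S := ∫ ω, ‖f' (X ω)‖ ^ 2 ∂μ with hS
  set P := ∫ ω, ⟪f' (X ω), g ω⟫ ∂μ with hP
  set Q := ∫ ω, ‖g ω‖ ^ 2 ∂μ with hQ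
  have c1 : -(η * P) ≤ -(η * S) + L * η ^ 2 / 2 * S + B ^ 2 / (2 * L) := by
    have h2' : η * (S - (L * η / 2 * S + B ^ 2 / (2 * L * η))) ≤ η * P :=
      mul_le_mul_of_nonneg_left EAg hη.le
    have e : η * (S - (L * η / 2 * S + B ^ 2 / (2 * L * η)))
        = η * S - (L * η ^ 2 / 2 * S + B ^ 2 / (2 * L)) := by
      field_simp
    rw [e] at h2'
    linarith
  have c2 : L * η ^ 2 / 2 * Q ≤ L * η ^ 2 / 2 * (2 * S + 2 * σ ^ 2 + 2 * B ^ 2) :=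
    mul_le_mul_of_nonneg_left Eg2 (by positivity)
  have c3 : L * η ^ 2 / 2 * (2 * S + 2 * σ ^ 2 + 2 * B ^ 2)
      = L * η ^ 2 * S + L * η ^ 2 * σ ^ 2 + L * η ^ 2 * B ^ 2 := by ring
  have c4 : η * (1 - 3 * L * η / 2) * S = η * S - L * η ^ 2 / 2 * S - L * η ^ 2 * S := by ring
  linarith [Idesc, c1, c2]

end

set_option maxHeartbeats 1000000 in
theorem presam_unified_convergence {d : ℕ} {Ω : Type*} {m0 : MeasurableSpace Ω}
    (μ : Measure Ω) [IsProbabilityMeasure μ]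
    (ℱ : Filtration ℕ m0)
    (f : EuclideanSpace ℝ (Fin d) → ℝ)
    (f' : EuclideanSpace ℝ (Fin d) → EuclideanSpace ℝ (Fin d)) (fstar : ℝ)
    (hf : ∀ x, HasGradientAt f (f' x) x)
    (L σ : ℝ) (hL : 0 < L)
    (hSmooth : ∀ y z, ‖f' y - f' z‖ ≤ L * ‖y - z‖)
    (hLower : ∀ x, fstar ≤ f x)
    (G : ℕ → EuclideanSpace ℝ (Fin d) → Ω → EuclideanSpace ℝ (Fin d))
    (hGmeas : ∀ t, Measurable (Function.uncurry (G t)))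
    (hLip : ∀ t y z ω, ‖G t y ω - G t z ω‖ ≤ L * ‖y - z‖)
    (hUnbiased : ∀ t (Y : Ω → EuclideanSpace ℝ (Fin d)), Measurable[ℱ t] Y →
      μ[fun ω => G t (Y ω) ω | ℱ t] =ᵐ[μ] fun ω => f' (Y ω))
    (hVar : ∀ t (Y : Ω → EuclideanSpace ℝ (Fin d)), Measurable[ℱ t] Y →
      ∀ᵐ ω ∂μ, (μ[fun ω' => ‖G t (Y ω') ω' - f' (Y ω')‖ ^ 2 | ℱ t]) ω ≤ σ ^ 2)
    (T : ℕ) (hT : 1 ≤ T)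
    (η₀ ρ₀ D₀ : ℝ) (hη₀ : 0 < η₀) (hρ₀ : 0 < ρ₀) (hD₀ : 0 < D₀)
    (η ρ : ℝ) (hη : η = η₀ / Real.sqrt T) (hρ : ρ = ρ₀ / Real.sqrt T)
    (hηL : η ≤ 2 / (3 * L))
    (x₀ : EuclideanSpace ℝ (Fin d)) (X : ℕ → Ω → EuclideanSpace ℝ (Fin d))
    (hX0 : X 0 = fun _ => x₀)
    (ε : ℕ → Ω → EuclideanSpace ℝ (Fin d)) (hεm : ∀ t, Measurable (ε t))
    (hε : ∀ t, ∀ᵐ ω ∂μ, ‖ε t ω‖ ≤ ρ * D₀)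
    (hXrec : ∀ t, X (t + 1) = fun ω => X t ω - η • G t (X t ω + ε t ω) ω)
    (hXmeas : ∀ t, Measurable[ℱ t] (X t))
    (hInt1 : ∀ t, Integrable (fun ω => ‖f' (X t ω)‖ ^ 2) μ)
    (hInt2 : ∀ t, Integrable (fun ω => f (X t ω)) μ)
    (hInt3 : ∀ t, Integrable (fun ω => G t (X t ω + ε t ω) ω) μ)
    (hInt4 : ∀ t, Integrable (fun ω => ‖G t (X t ω + ε t ω) ω‖ ^ 2) μ)
    (hInt5 : ∀ t, Integrable (fun ω => ⟪f' (X t ω), G t (X t ω + ε t ω) ω⟫) μ) :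
    (1 - 3 * L * η / 2) *
        ((1 / (T : ℝ)) * ∑ t ∈ Finset.range T, ∫ ω, ‖f' (X t ω)‖ ^ 2 ∂μ) ≤
      (f x₀ - fstar) / (η₀ * Real.sqrt T) +
        L * ρ₀ ^ 2 * D₀ ^ 2 / (2 * η₀ * Real.sqrt T) +
        L ^ 3 * η₀ * ρ₀ ^ 2 * D₀ ^ 2 / (T : ℝ) ^ ((3 : ℝ) / 2) +
        L * η₀ * σ ^ 2 / Real.sqrt T := by
  have hT0 : (0 : ℝ) < (T : ℝ) := by exact_mod_cast Nat.lt_of_lt_of_le Nat.zero_lt_one hT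
  have hsT : 0 < Real.sqrt T := Real.sqrt_pos.2 hT0
  have hηpos : 0 < η := by rw [hη]; positivity
  have hρpos : 0 < ρ := by rw [hρ]; positivity
  have hfc : Continuous f' := by
    have : LipschitzWith ⟨L, hL.le⟩ f' := by
      refine LipschitzWith.of_dist_le_mul fun y z => ?_
      rw [dist_eq_norm, dist_eq_norm]
      exact hSmooth y z
    exact this.continuous
  have hdesc : ∀ x v, f (x + v) ≤ f x + ⟪f' x, v⟫ + L / 2 * ‖v‖ ^ 2 :=
    descent_lemma f f' hf L hL hSmooth
  set B := L * ρ * D₀ with hB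
  have hBpos : (0 : ℝ) ≤ B := by rw [hB]; positivity
  set C := B ^ 2 / (2 * L) + L * η ^ 2 * σ ^ 2 + L * η ^ 2 * B ^ 2 with hC
  have key : ∀ t, ∫ ω, f (X (t + 1) ω) ∂μ ≤ ∫ ω, f (X t ω) ∂μ
      - η * (1 - 3 * L * η / 2) * ∫ ω, ‖f' (X t ω)‖ ^ 2 ∂μ + C := by
    intro t
    have mX : Measurable (X t) := (hXmeas t).mono (ℱ.le t) le_rfl
    have mh : Measurable (fun ω => G t (X t ω) ω) :=
      (hGmeas t).comp (mX.prodMk measurable_id)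
    have mg : Measurable (fun ω => G t (X t ω + ε t ω) ω) :=
      (hGmeas t).comp ((mX.add (hεm t)).prodMk measurable_id)
    have hgh : ∀ᵐ ω ∂μ, ‖G t (X t ω + ε t ω) ω - G t (X t ω) ω‖ ≤ B := by
      filter_upwards [hε t] with ω hω
      calc ‖G t (X t ω + ε t ω) ω - G t (X t ω) ω‖
          ≤ L * ‖(X t ω + ε t ω) - X t ω‖ := hLip t _ _ ω
        _ = L * ‖ε t ω‖ := by rw [add_sub_cancel_left]
        _ ≤ L * (ρ * D₀) := mul_le_mul_of_nonneg_left hω hL.le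
        _ = B := by rw [hB]; ring
    exact step_bound μ (ℱ.le t) f f' L σ η B hL hηpos hBpos hfc hdesc
      (X t) (X (t + 1)) _ _ (hXrec t) (hXmeas t) mg mh hgh
      (hUnbiased t (X t) (hXmeas t)) (hVar t (X t) (hXmeas t))
      (hInt2 t) (hInt2 (t + 1)) (hInt1 t) (hInt3 t) (hInt4 t) (hInt5 t)
  have telescope : ∑ t ∈ Finset.range T, (∫ ω, f (X t ω) ∂μ - ∫ ω, f (X (t + 1) ω) ∂μ)
      = ∫ ω, f (X 0 ω) ∂μ - ∫ ω, f (X T ω) ∂μ :=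
    Finset.sum_range_sub' (fun t => ∫ ω, f (X t ω) ∂μ) T
  have hX0' : ∫ ω, f (X 0 ω) ∂μ = f x₀ := by rw [hX0]; simp
  have hXT : fstar ≤ ∫ ω, f (X T ω) ∂μ := by
    have e : (fstar : ℝ) = ∫ _ω, fstar ∂μ := by simp
    rw [e]
    exact integral_mono (integrable_const _) (hInt2 T) fun ω => hLower _
  set Ssum := ∑ t ∈ Finset.range T, ∫ ω, ‖f' (X t ω)‖ ^ 2 ∂μ with hSsum
  have sumkey : η * (1 - 3 * L * η / 2) * Ssum ≤ (f x₀ - fstar) + T * C := by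
    have hsum : ∑ t ∈ Finset.range T, (η * (1 - 3 * L * η / 2) * ∫ ω, ‖f' (X t ω)‖ ^ 2 ∂μ)
        ≤ ∑ t ∈ Finset.range T, ((∫ ω, f (X t ω) ∂μ - ∫ ω, f (X (t + 1) ω) ∂μ) + C) :=
      Finset.sum_le_sum fun t _ => by linarith [key t]
    rw [Finset.sum_add_distrib, telescope, ← Finset.mul_sum] at hsum
    simp only [Finset.sum_const, Finset.card_range, nsmul_eq_mul] at hsum
    rw [hX0'] at hsum
    rw [hSsum]
    linarith [hXT]
  -- final algebra
  have hdiv : (1 - 3 * L * η / 2) * ((1 / (T : ℝ)) * Ssum)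
      = (η * (1 - 3 * L * η / 2) * Ssum) / (η * T) := by
    field_simp
  have step2 : (η * (1 - 3 * L * η / 2) * Ssum) / (η * T)
      ≤ ((f x₀ - fstar) + T * C) / (η * T) := by
    exact (div_le_div_iff_of_pos_right (by positivity : (0:ℝ) < η * T)).mpr sumkey
  have hT32 : ((T : ℝ)) ^ ((3 : ℝ) / 2) = Real.sqrt T ^ 3 := by
    rw [Real.sqrt_eq_rpow, ← Real.rpow_natCast ((T : ℝ) ^ ((1 : ℝ) / 2)) 3,
      ← Real.rpow_mul hT0.le]
    norm_num
  have hTs : (T : ℝ) = Real.sqrt T ^ 2 := (Real.sq_sqrt hT0.le).symm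
  have eqR : ((f x₀ - fstar) + T * C) / (η * T)
      = (f x₀ - fstar) / (η₀ * Real.sqrt T) +
        L * ρ₀ ^ 2 * D₀ ^ 2 / (2 * η₀ * Real.sqrt T) +
        L ^ 3 * η₀ * ρ₀ ^ 2 * D₀ ^ 2 / (T : ℝ) ^ ((3 : ℝ) / 2) +
        L * η₀ * σ ^ 2 / Real.sqrt T := by
    rw [hC, hB, hη, hρ, hT32]
    rw [hTs]
    set s := Real.sqrt T with hs
    have hs0 : s ≠ 0 := ne_of_gt hsT
    rw [Real.sqrt_sq hsT.le]
    field_simp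
    ring
  rw [eqR] at step2
  calc (1 - 3 * L * η / 2) * ((1 / (T : ℝ)) * Ssum)
      = (η * (1 - 3 * L * η / 2) * Ssum) / (η * T) := hdiv
    _ ≤ _ := step2
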